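/- arXiv:1209.1220 — 2 statements merged into one kernel-verified Lean document; each statement's English description precedes it below -/
import Mathlib

section
/- Let d ≥ 4 be even and S = {x ∈ F_q^d : a_1x_1² + ⋯ + a_dx_d² = 0} with all a_j nonzero. Then for every m ∈ F_q^d with m ≠ 0, one has |Σ_{x∈S} χ(m·x)| ≤ C q^{d/2} for some absolute constant C; equivalently, |(dσ)^∨(m)| ≲ q^{-(d-2)/2}. -/
open Finset

def quadSurf {F : Type} [Field F] [Fintype F] [DecidableEq F] {d : ℕ}
    (a : Fin d → F) : Finset (Fin d → F) :=
  Finset.univ.filter (fun x => ∑ i, a i * x i ^ 2 = 0)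

def dualSurf {F : Type} [Field F] [Fintype F] [DecidableEq F] {d : ℕ}
    (a : Fin d → F) : Finset (Fin d → F) :=
  Finset.univ.filter (fun m => ∑ i, m i ^ 2 * (a i)⁻¹ = 0)

noncomputable def gSum {F : Type} [Field F] [Fintype F] [DecidableEq F]
    (χ : AddChar F ℂ) : ℂ :=
  ∑ s ∈ Finset.univ.erase (0 : F), ((quadraticChar F s : ℤ) : ℂ) * χ s

noncomputable def sigmaInv {F : Type} [Field F] [Fintype F] [DecidableEq F]
    (χ : AddChar F ℂ) {d : ℕ} (a : Fin d → F) (m : Fin d → F) : ℂ :=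
  ((quadSurf a).card : ℂ)⁻¹ * ∑ x ∈ quadSurf a, χ (∑ i, m i * x i)

noncomputable def brKernel {F : Type} [Field F] [Fintype F] [DecidableEq F]
    (χ : AddChar F ℂ) {d : ℕ} (a : Fin d → F) (m : Fin d → F) : ℂ :=
  if m = 0 then 0 else sigmaInv χ a m

noncomputable def brKernelHat {F : Type} [Field F] [Fintype F] [DecidableEq F]
    (χ : AddChar F ℂ) {d : ℕ} (a : Fin d → F) (x : Fin d → F) : ℂ :=
  ∑ m : Fin d → F, brKernel χ a m * χ (-(∑ i, m i * x i))

noncomputable def convInd {F : Type} [Field F] [Fintype F] [DecidableEq F]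
    (χ : AddChar F ℂ) {d : ℕ} (a : Fin d → F) (E : Finset (Fin d → F))
    (x : Fin d → F) : ℂ :=
  ((Fintype.card F : ℂ) ^ d)⁻¹ *
    ∑ y : Fin d → F, (if x - y ∈ E then brKernelHat χ a y else 0)

noncomputable def convSig {F : Type} [Field F] [Fintype F] [DecidableEq F]
    {d : ℕ} (a : Fin d → F) (f : (Fin d → F) → ℂ) (x : Fin d → F) : ℂ :=
  ((quadSurf a).card : ℂ)⁻¹ * ∑ y ∈ quadSurf a, f (x - y)

noncomputable def Lnorm {α : Type} [Fintype α] (r : ℝ) (g : α → ℂ) : ℝ :=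
  ((Fintype.card α : ℝ)⁻¹ * ∑ x : α, ‖g x‖ ^ r) ^ (1 / r)

/-! Insert the indicator of `Q(x) = 0` as `q⁻¹ ∑ₛ χ(s Q(x))`. The `s = 0` term is `q^d [m = 0]`,
and for `s ≠ 0` the sum over `x` splits into `d` one-variable Gauss sums of modulus `√q`, so the
error has modulus at most `(q - 1) q^{d/2}`. Taking `m = 0` gives `|S| ≳ q^{d-1}` once `d ≥ 4`,
and any `m ≠ 0` gives `|∑_{x ∈ S} χ(m·x)| ≤ q^{d/2}`. -/

lemma AddChar.map_sum_eq_prod {A M ι : Type*} [AddCommMonoid A] [CommMonoid M] (χ : AddChar A M)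
    (s : Finset ι) (f : ι → A) : χ (∑ i ∈ s, f i) = ∏ i ∈ s, χ (f i) := by
  induction s using Finset.cons_induction with
  | empty => simp
  | cons i s hi ih => rw [sum_cons, prod_cons, AddChar.map_add_eq_mul, ih]

lemma AddChar.sum_mul_conj_sum {G α : Type*} [AddCommGroup G] [Finite G] [Fintype α]
    (χ : AddChar G ℂ) (f : α → G) :
    (∑ t, χ (f t)) * starRingEnd ℂ (∑ u, χ (f u)) = ∑ t, ∑ u, χ (f t - f u) := by
  simp_rw [map_sum, sum_mul_sum, ← AddChar.map_neg_eq_conj, ← AddChar.map_add_eq_mul,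
    sub_eq_add_neg]

lemma two_ne_zero_of_odd_card {F : Type*} [Field F] [Fintype F] (hq : Odd (Fintype.card F)) :
    (2 : F) ≠ 0 :=
  Ring.two_ne_zero fun h => by
    have := FiniteField.even_card_iff_char_two.mp h
    rw [Nat.odd_iff] at hq
    omega

lemma norm_sq_sum_addChar_quadratic {F : Type*} [Field F] [Fintype F]
    (hq : Odd (Fintype.card F)) {χ : AddChar F ℂ} (hχ : χ ≠ 1) {A : F} (hA : A ≠ 0) (B : F) :
    ‖∑ t : F, χ (A * t ^ 2 + B * t)‖ ^ 2 = Fintype.card F := by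
  classical
  have h2A : 2 * A ≠ 0 := mul_ne_zero (two_ne_zero_of_odd_card hq) hA
  -- substituting `t = u + v`, the phase is linear in `u`, so orthogonality kills all `v ≠ 0`
  have inner (v : F) : ∑ u : F, χ ((A * (u + v) ^ 2 + B * (u + v)) - (A * u ^ 2 + B * u)) =
      if v = 0 then (Fintype.card F : ℂ) else 0 := by
    have hphase (u : F) : (A * (u + v) ^ 2 + B * (u + v)) - (A * u ^ 2 + B * u) =
        u * (2 * A * v) + (A * v ^ 2 + B * v) := by ring
    simp_rw [hphase, AddChar.map_add_eq_mul, ← sum_mul,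
      AddChar.sum_mulShift _ (AddChar.IsPrimitive.of_ne_one hχ)]
    by_cases hv : v = 0
    · simp [hv]
    · simp [hv, mul_ne_zero h2A hv]
  have hC : ((‖∑ t : F, χ (A * t ^ 2 + B * t)‖ ^ 2 : ℝ) : ℂ) = Fintype.card F := by
    rw [Complex.ofReal_pow, ← Complex.mul_conj', AddChar.sum_mul_conj_sum, sum_comm]
    calc ∑ u : F, ∑ t : F, χ ((A * t ^ 2 + B * t) - (A * u ^ 2 + B * u))
        = ∑ v : F, ∑ u : F, χ ((A * (u + v) ^ 2 + B * (u + v)) - (A * u ^ 2 + B * u)) := by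
          refine (sum_congr rfl fun u _ => ?_).trans sum_comm
          exact (Equiv.sum_comp (Equiv.addLeft u) _).symm
      _ = Fintype.card F := by simp [inner]
  exact_mod_cast hC

section PhaseSum

variable {F ι : Type} [Field F] [Fintype F] [Fintype ι] [DecidableEq ι]

noncomputable def quadPhaseSum (χ : AddChar F ℂ) (a m : ι → F) (s : F) : ℂ :=
  ∑ x : ι → F, χ (s * ∑ i, a i * x i ^ 2 + ∑ i, m i * x i)

lemma quadPhaseSum_eq_prod (χ : AddChar F ℂ) (a m : ι → F) (s : F) :
    quadPhaseSum χ a m s = ∏ i, ∑ t : F, χ (s * a i * t ^ 2 + m i * t) := by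
  rw [Fintype.prod_sum, quadPhaseSum]
  refine sum_congr rfl fun x _ => ?_
  rw [← AddChar.map_sum_eq_prod, mul_sum, ← sum_add_distrib]
  simp_rw [mul_assoc]

lemma quadPhaseSum_zero [DecidableEq F] {χ : AddChar F ℂ} (hχ : χ ≠ 1) (a m : ι → F) :
    quadPhaseSum χ a m 0 = if m = 0 then (Fintype.card F : ℂ) ^ Fintype.card ι else 0 := by
  have hfactor (i : ι) : ∑ t : F, χ (0 * a i * t ^ 2 + m i * t) =
      if m i = 0 then (Fintype.card F : ℂ) else 0 := by
    simp_rw [zero_mul, zero_add, mul_comm (m i)]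
    rw [AddChar.sum_mulShift _ (AddChar.IsPrimitive.of_ne_one hχ), Nat.cast_ite, Nat.cast_zero]
  simp_rw [quadPhaseSum_eq_prod, hfactor, Fintype.prod_ite_zero, ← funext_iff, prod_const,
    card_univ]
  rfl

lemma norm_sq_quadPhaseSum (hq : Odd (Fintype.card F)) {χ : AddChar F ℂ} (hχ : χ ≠ 1)
    {a : ι → F} (ha : ∀ i, a i ≠ 0) (m : ι → F) {s : F} (hs : s ≠ 0) :
    ‖quadPhaseSum χ a m s‖ ^ 2 = (Fintype.card F : ℝ) ^ Fintype.card ι := by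
  simp_rw [quadPhaseSum_eq_prod, norm_prod, ← prod_pow,
    norm_sq_sum_addChar_quadratic hq hχ (mul_ne_zero hs (ha _)), prod_const, card_univ]

end PhaseSum

section QuadSurf

variable {F : Type} [Field F] [Fintype F] [DecidableEq F] {d : ℕ}

lemma card_mul_sum_quadSurf {χ : AddChar F ℂ} (hχ : χ ≠ 1) (a m : Fin d → F) :
    (Fintype.card F : ℂ) * ∑ x ∈ quadSurf a, χ (∑ i, m i * x i) =
      ∑ s : F, quadPhaseSum χ a m s := by
  have hdetect (x : Fin d → F) : ∑ s : F, χ (s * ∑ i, a i * x i ^ 2 + ∑ i, m i * x i) =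
      if ∑ i, a i * x i ^ 2 = 0 then Fintype.card F * χ (∑ i, m i * x i) else 0 := by
    simp_rw [AddChar.map_add_eq_mul, ← sum_mul,
      AddChar.sum_mulShift _ (AddChar.IsPrimitive.of_ne_one hχ)]
    split_ifs <;> simp
  simp_rw [quadPhaseSum, sum_comm (γ := F), hdetect, ← sum_filter, ← mul_sum]
  rfl

lemma norm_card_mul_sum_quadSurf_sub_le (hq : Odd (Fintype.card F)) {χ : AddChar F ℂ}
    (hχ : χ ≠ 1) (hd : Even d) {a : Fin d → F} (ha : ∀ i, a i ≠ 0) (m : Fin d → F) :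
    ‖(Fintype.card F : ℂ) * ∑ x ∈ quadSurf a, χ (∑ i, m i * x i) -
        (if m = 0 then (Fintype.card F : ℂ) ^ d else 0)‖ ≤
      ((Fintype.card F : ℝ) - 1) * (Fintype.card F : ℝ) ^ (d / 2) := by
  have hterm (s : F) (hs : s ∈ univ.erase 0) :
      ‖quadPhaseSum χ a m s‖ ≤ (Fintype.card F : ℝ) ^ (d / 2) := by
    refine le_of_eq ((pow_left_inj₀ (norm_nonneg _) (by positivity) two_ne_zero).mp ?_)
    rw [norm_sq_quadPhaseSum hq hχ ha m (ne_of_mem_erase hs), Fintype.card_fin, ← pow_mul,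
      Nat.div_mul_cancel hd.two_dvd]
  rw [card_mul_sum_quadSurf hχ, ← add_sum_erase _ _ (mem_univ 0), quadPhaseSum_zero hχ,
    Fintype.card_fin, add_sub_cancel_left]
  refine (norm_sum_le_of_le _ hterm).trans_eq ?_
  rw [sum_const, card_erase_of_mem (mem_univ 0), card_univ, nsmul_eq_mul,
    Nat.cast_pred Fintype.card_pos]

lemma norm_sum_quadSurf_le (hq : Odd (Fintype.card F)) {χ : AddChar F ℂ} (hχ : χ ≠ 1)
    (hd : Even d) {a : Fin d → F} (ha : ∀ i, a i ≠ 0) {m : Fin d → F} (hm : m ≠ 0) :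
    ‖∑ x ∈ quadSurf a, χ (∑ i, m i * x i)‖ ≤ (Fintype.card F : ℝ) ^ (d / 2) := by
  have h := norm_card_mul_sum_quadSurf_sub_le hq hχ hd ha m
  rw [if_neg hm, sub_zero, norm_mul, Complex.norm_natCast] at h
  have hq0 : (0 : ℝ) < Fintype.card F := by exact_mod_cast Fintype.card_pos
  nlinarith [pow_pos hq0 (d / 2)]

lemma pow_le_two_mul_card_mul_card_quadSurf (hq : Odd (Fintype.card F)) {χ : AddChar F ℂ}
    (hχ : χ ≠ 1) (hd4 : 4 ≤ d) (hd : Even d) {a : Fin d → F} (ha : ∀ i, a i ≠ 0) :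
    (Fintype.card F : ℝ) ^ d ≤ 2 * Fintype.card F * (quadSurf a).card := by
  have h := norm_card_mul_sum_quadSurf_sub_le hq hχ hd ha 0
  simp only [Pi.zero_apply, zero_mul, sum_const_zero, AddChar.map_zero_eq_one, sum_const,
    nsmul_eq_mul, mul_one, if_true] at h
  obtain ⟨k, rfl⟩ := hd.two_dvd
  have hreal : (Fintype.card F : ℂ) * (quadSurf a).card - (Fintype.card F : ℂ) ^ (2 * k) =
      (((Fintype.card F : ℝ) * (quadSurf a).card - (Fintype.card F : ℝ) ^ (2 * k) : ℝ) : ℂ) := by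
    push_cast; rfl
  rw [hreal, Complex.norm_real, Real.norm_eq_abs, Nat.mul_div_cancel_left k two_pos] at h
  set q : ℝ := (Fintype.card F : ℝ)
  have hq1 : 1 ≤ q := Nat.one_le_cast.mpr Fintype.card_pos
  have hqk : q ^ 2 ≤ q ^ k := pow_le_pow_right₀ hq1 (by omega)
  rw [pow_mul'] at h ⊢
  nlinarith [(abs_le.mp h).1, sq_nonneg (q - 1), pow_pos (zero_lt_one.trans_le hq1) k]

end QuadSurf

/-- For d ≥ 4 even, the exponential sum over S satisfies
|∑_{x∈S} χ(m·x)| ≤ C q^{d/2} for all m ≠ 0, with C absolute; equivalently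
|(dσ)^∨(m)| ≲ q^{-(d-2)/2}. -/
theorem expSum_quadSurf_decay :
    ∃ C : ℝ, 0 < C ∧
      ∀ (F : Type) [Field F] [Fintype F] [DecidableEq F],
        Odd (Fintype.card F) →
        ∀ (χ : AddChar F ℂ), χ ≠ 1 →
        ∀ (d : ℕ), 4 ≤ d → Even d →
        ∀ (a : Fin d → F), (∀ i, a i ≠ 0) →
        ∀ (m : Fin d → F), m ≠ 0 →
          ‖∑ x ∈ quadSurf a, χ (∑ i, m i * x i)‖
              ≤ C * (Fintype.card F : ℝ) ^ (d / 2) ∧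
          ‖sigmaInv χ a m‖
              ≤ C * (Fintype.card F : ℝ) ^ (-(((d : ℝ) - 2) / 2)) := by
  refine ⟨2, two_pos, fun F _ _ _ hq χ hχ d hd4 hd a ha m hm => ?_⟩
  have hsum := norm_sum_quadSurf_le hq hχ hd ha hm
  have hcard := pow_le_two_mul_card_mul_card_quadSurf hq hχ hd4 hd ha
  have hq0 : (0 : ℝ) < Fintype.card F := Nat.cast_pos.mpr Fintype.card_pos
  refine ⟨by linarith [norm_nonneg (∑ x ∈ quadSurf a, χ (∑ i, m i * x i))], ?_⟩
  obtain ⟨k, rfl⟩ := hd.two_dvd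
  rw [Nat.mul_div_cancel_left k two_pos] at hsum
  rw [pow_mul'] at hcard
  set q : ℝ := (Fintype.card F : ℝ)
  have hS : (0 : ℝ) < (quadSurf a).card := by
    have := pow_pos (pow_pos hq0 k) 2
    nlinarith
  have hexp : q ^ (-((((2 * k : ℕ) : ℝ) - 2) / 2)) = q / q ^ k := by
    rw [show -((((2 * k : ℕ) : ℝ) - 2) / 2) = 1 - k by push_cast; ring, Real.rpow_sub hq0,
      Real.rpow_one, Real.rpow_natCast]
  rw [sigmaInv, norm_mul, norm_inv, Complex.norm_natCast, hexp, inv_mul_le_iff₀ hS,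
    ← mul_div_assoc, ← mul_div_assoc, le_div_iff₀ (pow_pos hq0 k)]
  nlinarith [pow_pos hq0 k]
end

section
/- Let K be the Bochner–Riesz kernel associated to a nondegenerate diagonal quadratic surface S ⊂ F_q^4. Then for every E ⊂ F_q^4: ‖E ∗ K̂‖_{L^6(F_q^4,dx)} ≲ q^{-19/6} |E|^{5/6} if 1 ≤ |E| ≤ q; ≲ q^{-10/3} |E| if q ≤ |E| ≤ q²; and ≲ q^{-3} |E|^{5/6} if q² ≤ |E| ≤ q⁴. -/
open Finset

/-!
Write `q = #F`, `S` for the surface and `Ê(m) = ∑_{z ∈ E} χ(m · z)`. Fourier inversion gives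
`(E ∗ K̂)(x) = |S|⁻¹ #{y ∈ S | x - y ∈ E} - q⁻⁴ |E|`, and `|S| ≥ q³ / 2`, so `E ∗ K̂` is
pointwise `O(|E| q⁻³)`. Detecting `Q(x) = 0` by a sum over `t ∈ F` and completing the square
reduces `(dσ)^∨` to Gauss sums: for `m ≠ 0` it has size `|S|⁻¹ (q² - q)` on the dual surface `S*`
and `|S|⁻¹ q` off it. By Plancherel, `∑ₓ |E ∗ K̂|² = q⁻⁴ ∑ₘ |K(m)|² |Ê(m)|²`; splitting the
frequencies along `S*` and using `∑_{m ∈ S*} |Ê(m)|² ≤ |E| |S*| + |E|² q²` (the same Gauss sum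
bound, now for `S*`) gives `O(q⁻⁴ (|E| q + |E|²))`, while the uniform kernel bound gives
`O(q⁻² |E|)`. Finally `‖f‖₆⁶ ≤ ‖f‖_∞⁴ ‖f‖₂²`.
-/

open ComplexConjugate

namespace AddChar
variable {A M : Type*} [AddCommMonoid A] [CommMonoid M]

lemma map_sum_eq_prod_s9 (ψ : AddChar A M) {ι : Type*} (s : Finset ι) (f : ι → A) :
    ψ (∑ i ∈ s, f i) = ∏ i ∈ s, ψ (f i) := by
  induction s using Finset.cons_induction with
  | empty => simp
  | cons a s _ ih => rw [sum_cons, prod_cons, map_add_eq_mul, ih]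

end AddChar

lemma four_ne_zero_of_ringChar_ne_two {F : Type*} [Field F] (hF : ringChar F ≠ 2) :
    (4 : F) ≠ 0 := by
  simpa [show (4 : F) = 2 ^ 2 by norm_num] using pow_ne_zero 2 (Ring.two_ne_zero hF)

section
variable {F : Type} [Field F] [Fintype F] [DecidableEq F] {χ : AddChar F ℂ} {d : ℕ}

/-! ### Orthogonality and Plancherel on `Fin d → F` -/

lemma sum_apply_dotProduct_eq_ite (hχ : χ ≠ 1) (z : Fin d → F) :
    ∑ x : Fin d → F, χ (z ⬝ᵥ x) = if z = 0 then (Fintype.card F : ℂ) ^ d else 0 := by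
  have hprod : ∑ x : Fin d → F, χ (z ⬝ᵥ x) = ∏ i, ∑ u : F, χ (u * z i) := by
    simp only [Fintype.prod_sum, dotProduct, AddChar.map_sum_eq_prod_s9, mul_comm]
  simp_rw [hprod, AddChar.sum_mulShift _ (AddChar.IsPrimitive.of_ne_one hχ)]
  split_ifs with hz
  · simp [hz]
  · obtain ⟨i, hi⟩ := Function.ne_iff.mp hz
    exact Finset.prod_eq_zero (mem_univ i) (by simpa using hi)

lemma card_mul_sum_filter_eq_zero {α : Type*} [Fintype α] (hχ : χ ≠ 1) (P : α → F)
    (f : α → ℂ) :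
    (Fintype.card F : ℂ) * ∑ x ∈ univ.filter (fun x => P x = 0), f x
      = ∑ t : F, ∑ x, χ (t * P x) * f x := by
  rw [Finset.sum_comm, Finset.sum_filter, Finset.mul_sum]
  refine Finset.sum_congr rfl fun x _ => ?_
  rw [← Finset.sum_mul, AddChar.sum_mulShift _ (AddChar.IsPrimitive.of_ne_one hχ)]
  split_ifs <;> simp

lemma sum_norm_sq_fourier (hχ : χ ≠ 1) (c : (Fin d → F) → ℂ) :
    ∑ x : Fin d → F, ‖∑ m, c m * χ (-(m ⬝ᵥ x))‖ ^ 2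
      = (Fintype.card F : ℝ) ^ d * ∑ m, ‖c m‖ ^ 2 := by
  have hexpand : ∀ x : Fin d → F, ‖∑ m, c m * χ (-(m ⬝ᵥ x))‖ ^ 2
      = ∑ m, ∑ m', c m * conj (c m') * χ ((m' - m) ⬝ᵥ x) := by
    intro x
    rw [← Complex.mul_conj', map_sum, Finset.sum_mul_sum]
    refine Finset.sum_congr rfl fun m _ => Finset.sum_congr rfl fun m' _ => ?_
    rw [map_mul, ← AddChar.map_neg_eq_conj, neg_neg, mul_mul_mul_comm,
      ← AddChar.map_add_eq_mul, sub_dotProduct, neg_add_eq_sub]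
  apply Complex.ofReal_injective
  push_cast
  simp_rw [hexpand]
  rw [Finset.sum_comm, Finset.mul_sum]
  refine Finset.sum_congr rfl fun m _ => ?_
  rw [Finset.sum_comm]
  simp_rw [← Finset.mul_sum, sum_apply_dotProduct_eq_ite hχ, sub_eq_zero, mul_ite, mul_zero,
    Finset.sum_ite_eq', if_pos (mem_univ _), Complex.mul_conj']
  ring

/-! ### Gauss sums and the Fourier transform of `quadSurf` -/

noncomputable def complexQuadraticChar (F : Type) [Field F] [Fintype F] [DecidableEq F] :
    MulChar F ℂ :=
  (quadraticChar F).ringHomComp (Int.castRingHom ℂ)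

@[simp] lemma complexQuadraticChar_apply (a : F) :
    complexQuadraticChar F a = (quadraticChar F a : ℂ) := rfl

lemma complexQuadraticChar_dichotomy {a : F} (ha : a ≠ 0) :
    complexQuadraticChar F a = 1 ∨ complexQuadraticChar F a = -1 := by
  rcases quadraticChar_dichotomy ha with h | h <;> simp [h]

lemma complexQuadraticChar_sq_mul {a : F} (ha : a ≠ 0) (b : F) :
    complexQuadraticChar F (a ^ 2 * b) = complexQuadraticChar F b := by
  rw [complexQuadraticChar_apply, complexQuadraticChar_apply, map_mul, quadraticChar_sq_one' ha,
    one_mul]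

lemma gaussSum_complexQuadraticChar_sq (hF : ringChar F ≠ 2) (hχ : χ ≠ 1) :
    gaussSum (complexQuadraticChar F) χ ^ 2
      = complexQuadraticChar F (-1) * Fintype.card F :=
  gaussSum_sq ((MulChar.ringHomComp_ne_one_iff Int.cast_injective).mpr (quadraticChar_ne_one hF))
    ((quadraticChar_isQuadratic F).comp _) (AddChar.IsPrimitive.of_ne_one hχ)

lemma sum_apply_mul_sq (hF : ringChar F ≠ 2) (hχ : χ ≠ 1) {c : F} (hc : c ≠ 0) :
    ∑ u, χ (c * u ^ 2)
      = complexQuadraticChar F c * gaussSum (complexQuadraticChar F) χ := by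
  set η := complexQuadraticChar F
  have hsqrts : ∀ a : F, (#{u : F | u ^ 2 = a} : ℂ) = η a + 1 := by
    intro a
    have := quadraticChar_card_sqrts hF a
    rw [Set.toFinset_ofPred] at this
    simp only [η, complexQuadraticChar_apply]
    exact_mod_cast this
  have hshift : η c * gaussSum η (χ.mulShift c) = gaussSum η χ :=
    gaussSum_mulShift η χ (Units.mk0 c hc)
  calc ∑ u, χ (c * u ^ 2) = ∑ a, ∑ u with u ^ 2 = a, χ (c * a) := by
        rw [← Finset.sum_fiberwise univ (· ^ 2)]
        exact Finset.sum_congr rfl fun a _ => Finset.sum_congr rfl fun u hu => by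
          rw [(Finset.mem_filter.mp hu).2]
    _ = ∑ a, η a * χ (a * c) + ∑ a, χ (a * c) := by
        simp only [Finset.sum_const, nsmul_eq_mul, hsqrts, ← Finset.sum_add_distrib, mul_comm c]
        exact Finset.sum_congr rfl fun a _ => by ring
    _ = η c * gaussSum η χ := by
        rw [AddChar.sum_mulShift _ (AddChar.IsPrimitive.of_ne_one hχ), if_neg hc, Nat.cast_zero,
          add_zero, ← hshift, ← mul_assoc, ← sq, ← map_pow, ← mul_one (c ^ 2),
          complexQuadraticChar_sq_mul hc, map_one, one_mul]
        simp only [gaussSum, AddChar.mulShift_apply, mul_comm c]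

lemma sum_apply_quadratic (hF : ringChar F ≠ 2) (hχ : χ ≠ 1) {c : F} (hc : c ≠ 0) (b : F) :
    ∑ u, χ (c * u ^ 2 + b * u)
      = χ (-(b ^ 2 / (4 * c)))
        * (complexQuadraticChar F c * gaussSum (complexQuadraticChar F) χ) := by
  have h2 : (2 : F) ≠ 0 := Ring.two_ne_zero hF
  have h4 := four_ne_zero_of_ringChar_ne_two hF
  have hsq : ∀ u, c * u ^ 2 + b * u = c * (u + b / (2 * c)) ^ 2 + -(b ^ 2 / (4 * c)) := by
    intro u; field_simp; ring
  simp_rw [hsq, AddChar.map_add_eq_mul, ← Finset.sum_mul,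
    Fintype.sum_equiv (Equiv.addRight (b / (2 * c))) (fun u => χ (c * (u + b / (2 * c)) ^ 2))
      (fun v => χ (c * v ^ 2)) (fun _ => rfl), sum_apply_mul_sq hF hχ hc, mul_comm]

lemma sum_erase_zero_apply_div (hχ : χ ≠ 1) (c : F) :
    ∑ t ∈ univ.erase 0, χ (c / t) = (if c = 0 then (Fintype.card F : ℂ) else 0) - 1 := by
  have hall : ∑ t, χ (c / t) = if c = 0 then (Fintype.card F : ℂ) else 0 := by
    simp_rw [div_eq_mul_inv, Fintype.sum_equiv (Equiv.inv F) (fun t => χ (c * t⁻¹))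
      (fun s => χ (c * s)) (fun _ => rfl), mul_comm c]
    rw [AddChar.sum_mulShift _ (AddChar.IsPrimitive.of_ne_one hχ)]
    split_ifs <;> simp
  rw [← hall, ← Finset.add_sum_erase univ _ (mem_univ 0), div_zero, AddChar.map_zero_eq_one]
  ring

lemma sum_apply_diagonal_quadratic (hd : Even d) (hF : ringChar F ≠ 2) (hχ : χ ≠ 1)
    {b : Fin d → F} (hb : ∀ i, b i ≠ 0) (m : Fin d → F) {t : F} (ht : t ≠ 0) :
    ∑ x : Fin d → F, χ (t * ∑ i, b i * x i ^ 2) * χ (m ⬝ᵥ x)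
      = χ (-(∑ i, m i ^ 2 * (b i)⁻¹) / 4 / t)
        * (complexQuadraticChar F (∏ i, b i) * gaussSum (complexQuadraticChar F) χ ^ d) := by
  set η := complexQuadraticChar F
  have h4 := four_ne_zero_of_ringChar_ne_two hF
  obtain ⟨k, rfl⟩ := hd
  calc ∑ x : Fin (k + k) → F, χ (t * ∑ i, b i * x i ^ 2) * χ (m ⬝ᵥ x)
      = ∏ i, ∑ u, χ (t * b i * u ^ 2 + m i * u) := by
        rw [Fintype.prod_sum]
        refine Finset.sum_congr rfl fun x _ => ?_
        rw [← AddChar.map_add_eq_mul, ← AddChar.map_sum_eq_prod_s9, dotProduct, Finset.mul_sum,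
          ← Finset.sum_add_distrib]
        simp only [mul_assoc]
    _ = ∏ i, χ (-(m i ^ 2 / (4 * (t * b i)))) * (η (t * b i) * gaussSum η χ) :=
        Finset.prod_congr rfl fun i _ => sum_apply_quadratic hF hχ (mul_ne_zero ht (hb i)) (m i)
    _ = _ := by
        rw [Finset.prod_mul_distrib, Finset.prod_mul_distrib, ← AddChar.map_sum_eq_prod_s9,
          ← map_prod, Finset.prod_mul_distrib, Finset.prod_const, Finset.prod_const,
          Finset.card_univ, Fintype.card_fin, show t ^ (k + k) = (t ^ k) ^ 2 by ring,
          complexQuadraticChar_sq_mul (pow_ne_zero _ ht), ← Finset.sum_neg_distrib,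
          Finset.sum_div, Finset.sum_div]
        congr 2
        refine Finset.sum_congr rfl fun i _ => ?_
        field_simp [hb i]

theorem card_mul_sum_quadSurf_s9 (hd : Even d) (hF : ringChar F ≠ 2) (hχ : χ ≠ 1)
    {b : Fin d → F} (hb : ∀ i, b i ≠ 0) (m : Fin d → F) :
    (Fintype.card F : ℂ) * ∑ x ∈ quadSurf b, χ (m ⬝ᵥ x)
      = (if m = 0 then (Fintype.card F : ℂ) ^ d else 0)
        + complexQuadraticChar F (∏ i, b i) * gaussSum (complexQuadraticChar F) χ ^ d
          * ((if m ∈ dualSurf b then (Fintype.card F : ℂ) else 0) - 1) := by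
  have h4 := four_ne_zero_of_ringChar_ne_two hF
  have hdual : m ∈ dualSurf b ↔ -(∑ i, m i ^ 2 * (b i)⁻¹) / 4 = 0 := by
    simp [dualSurf, h4]
  rw [quadSurf, card_mul_sum_filter_eq_zero hχ, ← Finset.add_sum_erase _ _ (mem_univ 0),
    Finset.sum_congr rfl fun t ht =>
      sum_apply_diagonal_quadratic hd hF hχ hb m (Finset.ne_of_mem_erase ht),
    ← Finset.sum_mul, sum_erase_zero_apply_div hχ]
  simp only [zero_mul, AddChar.map_zero_eq_one, one_mul]
  simp only [sum_apply_dotProduct_eq_ite hχ, hdual]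
  ring

/-! ### The convolution `convInd` -/

variable (χ) in
noncomputable def expSum (E : Finset (Fin d → F)) (m : Fin d → F) : ℂ :=
  ∑ z ∈ E, χ (m ⬝ᵥ z)

lemma sum_norm_sq_expSum_le (E U : Finset (Fin d → F)) {A : ℝ} (hA : 0 ≤ A)
    (hU : ∀ z ≠ 0, ‖∑ m ∈ U, χ (m ⬝ᵥ z)‖ ≤ A) :
    ∑ m ∈ U, ‖expSum χ E m‖ ^ 2 ≤ #E * #U + #E ^ 2 * A := by
  have hexpand : ((∑ m ∈ U, ‖expSum χ E m‖ ^ 2 : ℝ) : ℂ)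
      = ∑ u ∈ E, ∑ v ∈ E, ∑ m ∈ U, χ (m ⬝ᵥ (u - v)) := by
    push_cast
    simp_rw [← Complex.mul_conj', expSum, map_sum, ← AddChar.map_neg_eq_conj, sum_mul_sum,
      ← AddChar.map_add_eq_mul, dotProduct_sub, sub_eq_add_neg]
    rw [Finset.sum_comm]
    exact Finset.sum_congr rfl fun u _ => Finset.sum_comm
  have hterm : ∀ u ∈ E, ∀ v ∈ E,
      ‖∑ m ∈ U, χ (m ⬝ᵥ (u - v))‖ ≤ (if u = v then (#U : ℝ) else 0) + A := by
    intro u _ v _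
    split_ifs with huv
    · simp [huv, hA]
    · simpa using hU _ (sub_ne_zero.mpr huv)
  calc ∑ m ∈ U, ‖expSum χ E m‖ ^ 2 = ‖((∑ m ∈ U, ‖expSum χ E m‖ ^ 2 : ℝ) : ℂ)‖ := by
        rw [Complex.norm_real, Real.norm_of_nonneg (by positivity)]
    _ ≤ ∑ u ∈ E, ∑ v ∈ E, ‖∑ m ∈ U, χ (m ⬝ᵥ (u - v))‖ := by
        rw [hexpand]
        exact (norm_sum_le _ _).trans (Finset.sum_le_sum fun u _ => norm_sum_le _ _)
    _ ≤ ∑ u ∈ E, ∑ v ∈ E, ((if u = v then (#U : ℝ) else 0) + A) :=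
        Finset.sum_le_sum fun u hu => Finset.sum_le_sum fun v hv => hterm u hu v hv
    _ = #E * #U + #E ^ 2 * A := by
        simp only [Finset.sum_add_distrib, Finset.sum_ite_eq, Finset.sum_ite_mem,
          Finset.inter_self, Finset.sum_const, nsmul_eq_mul]
        ring

lemma sum_norm_sq_expSum_univ_le (hχ : χ ≠ 1) (E : Finset (Fin d → F)) :
    ∑ m, ‖expSum χ E m‖ ^ 2 ≤ #E * (Fintype.card F : ℝ) ^ d := by
  have h := sum_norm_sq_expSum_le (χ := χ) E univ le_rfl fun z hz => by
    simp_rw [dotProduct_comm _ z, sum_apply_dotProduct_eq_ite hχ, if_neg hz, norm_zero, le_rfl]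
  simpa [Fintype.card_fun] using h

lemma zero_mem_quadSurf (a : Fin d → F) : 0 ∈ quadSurf a := by
  simp [quadSurf]

variable (χ) in
lemma sigmaInv_zero (a : Fin d → F) : sigmaInv χ a 0 = 1 := by
  have h : (#(quadSurf a) : ℂ) ≠ 0 :=
    Nat.cast_ne_zero.mpr (card_ne_zero_of_mem (zero_mem_quadSurf a))
  simp [sigmaInv, h]

lemma brKernelHat_eq (hχ : χ ≠ 1) (a : Fin d → F) (y : Fin d → F) :
    brKernelHat χ a y
      = (Fintype.card F : ℂ) ^ d / #(quadSurf a) * (if y ∈ quadSurf a then 1 else 0) - 1 := by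
  have hK : ∀ m, brKernel χ a m = sigmaInv χ a m - if m = 0 then 1 else 0 := by
    intro m
    unfold brKernel
    split_ifs with hm <;> simp [hm, sigmaInv_zero]
  have hsplit : brKernelHat χ a y = ∑ m, sigmaInv χ a m * χ (-(m ⬝ᵥ y)) - 1 := by
    simp_rw [brKernelHat, hK, sub_mul, Finset.sum_sub_distrib, ite_mul, one_mul, zero_mul,
      Finset.sum_ite_eq', if_pos (mem_univ _)]
    simp [dotProduct]
  have hinv : ∑ m, sigmaInv χ a m * χ (-(m ⬝ᵥ y))
      = (#(quadSurf a) : ℂ)⁻¹ * ∑ x ∈ quadSurf a, ∑ m, χ (m ⬝ᵥ (x - y)) := by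
    simp_rw [sigmaInv, mul_assoc, ← Finset.mul_sum, Finset.sum_mul, dotProduct_sub,
      sub_eq_add_neg, AddChar.map_add_eq_mul]
    exact congrArg _ Finset.sum_comm
  simp_rw [hsplit, hinv, dotProduct_comm _ (_ - y), sum_apply_dotProduct_eq_ite hχ,
    sub_eq_zero, Finset.sum_ite_eq', div_eq_inv_mul]
  split_ifs <;> ring

lemma convInd_eq (hχ : χ ≠ 1) (a : Fin d → F) (E : Finset (Fin d → F)) (x : Fin d → F) :
    convInd χ a E x
      = #{y ∈ quadSurf a | x - y ∈ E} / #(quadSurf a) - #E / (Fintype.card F : ℂ) ^ d := by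
  have hq : (Fintype.card F : ℂ) ^ d ≠ 0 :=
    pow_ne_zero _ (Nat.cast_ne_zero.mpr Fintype.card_ne_zero)
  have hE : #{y | x - y ∈ E} = #E :=
    card_bij' (fun y _ => x - y) (fun z _ => x - z) (by simp) (by simp) (by simp) (by simp)
  have hterm : ∀ y, (if x - y ∈ E then
        (Fintype.card F : ℂ) ^ d / #(quadSurf a) * (if y ∈ quadSurf a then 1 else 0) - 1 else 0)
      = (Fintype.card F : ℂ) ^ d / #(quadSurf a) * (if y ∈ quadSurf a ∧ x - y ∈ E then 1 else 0)
        - if x - y ∈ E then 1 else 0 := by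
    intro y
    split_ifs <;> simp_all
  have hfilter :
      ({y | y ∈ quadSurf a ∧ x - y ∈ E} : Finset _) = {y ∈ quadSurf a | x - y ∈ E} := by
    ext; simp
  simp_rw [convInd, brKernelHat_eq hχ, hterm, Finset.sum_sub_distrib, ← Finset.mul_sum,
    Finset.sum_boole, hfilter, hE]
  field_simp

lemma norm_convInd_le (hχ : χ ≠ 1) (a : Fin d → F) (E : Finset (Fin d → F)) (x : Fin d → F) :
    ‖convInd χ a E x‖ ≤ #E / #(quadSurf a) + #E / (Fintype.card F : ℝ) ^ d := by
  have hcount : #{y ∈ quadSurf a | x - y ∈ E} ≤ #E :=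
    card_le_card_of_injOn (fun y => x - y) (fun y hy => (mem_filter.mp hy).2)
      (fun _ _ _ _ h => sub_right_injective h)
  rw [convInd_eq hχ]
  refine (norm_sub_le _ _).trans (add_le_add ?_ ?_)
  · rw [norm_div, Complex.norm_natCast, Complex.norm_natCast]
    gcongr
  · rw [norm_div, Complex.norm_natCast, norm_pow, Complex.norm_natCast]

variable (χ) in
lemma convInd_eq_sum (a : Fin d → F) (E : Finset (Fin d → F)) (x : Fin d → F) :
    convInd χ a E x = ((Fintype.card F : ℂ) ^ d)⁻¹
      * ∑ m, brKernel χ a m * expSum χ E m * χ (-(m ⬝ᵥ x)) := by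
  have hshift : ∑ y, (if x - y ∈ E then brKernelHat χ a y else 0)
      = ∑ z ∈ E, brKernelHat χ a (x - z) := by
    rw [← Finset.sum_filter]
    exact Finset.sum_nbij' (x - ·) (x - ·) (by simp) (by simp) (by simp) (by simp) (by simp)
  rw [convInd, hshift]
  congr 1
  simp_rw [brKernelHat, expSum, Finset.mul_sum, Finset.sum_mul]
  rw [Finset.sum_comm]
  refine Finset.sum_congr rfl fun m _ => Finset.sum_congr rfl fun z _ => ?_
  rw [mul_assoc, ← AddChar.map_add_eq_mul]
  congr 2
  simp only [dotProduct, Pi.sub_apply, mul_sub, Finset.sum_sub_distrib]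
  ring

lemma sum_norm_sq_convInd (hχ : χ ≠ 1) (a : Fin d → F) (E : Finset (Fin d → F)) :
    ∑ x, ‖convInd χ a E x‖ ^ 2
      = (∑ m, ‖brKernel χ a m‖ ^ 2 * ‖expSum χ E m‖ ^ 2) / (Fintype.card F : ℝ) ^ d := by
  have hq : (Fintype.card F : ℝ) ^ d ≠ 0 :=
    pow_ne_zero _ (Nat.cast_ne_zero.mpr Fintype.card_ne_zero)
  simp_rw [convInd_eq_sum χ a E, norm_mul, mul_pow, ← Finset.mul_sum, norm_inv, norm_pow,
    Complex.norm_natCast, sum_norm_sq_fourier hχ, norm_mul, mul_pow]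
  field_simp

/-! ### Dimension four -/

lemma gaussSum_complexQuadraticChar_pow_four (hF : ringChar F ≠ 2) (hχ : χ ≠ 1) :
    gaussSum (complexQuadraticChar F) χ ^ 4 = (Fintype.card F : ℂ) ^ 2 := by
  rw [show 4 = 2 * 2 by rfl, pow_mul, gaussSum_complexQuadraticChar_sq hF hχ, mul_pow, ← map_pow,
    neg_one_sq, map_one, one_mul]

lemma card_mul_sum_quadSurf_dim4 (hF : ringChar F ≠ 2) (hχ : χ ≠ 1) {b : Fin 4 → F}
    (hb : ∀ i, b i ≠ 0) (m : Fin 4 → F) :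
    (Fintype.card F : ℂ) * ∑ x ∈ quadSurf b, χ (m ⬝ᵥ x)
      = (if m = 0 then (Fintype.card F : ℂ) ^ 4 else 0)
        + complexQuadraticChar F (∏ i, b i) * (Fintype.card F : ℂ) ^ 2
          * ((if m ∈ dualSurf b then (Fintype.card F : ℂ) else 0) - 1) := by
  rw [card_mul_sum_quadSurf_s9 (by decide) hF hχ hb, gaussSum_complexQuadraticChar_pow_four hF hχ]

lemma card_quadSurf_dim4 (hF : ringChar F ≠ 2) (hχ : χ ≠ 1) {b : Fin 4 → F}
    (hb : ∀ i, b i ≠ 0) :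
    (#(quadSurf b) : ℝ) = (Fintype.card F : ℝ) ^ 3 + (Fintype.card F : ℝ) ^ 2 - Fintype.card F ∨
      (#(quadSurf b) : ℝ)
        = (Fintype.card F : ℝ) ^ 3 - (Fintype.card F : ℝ) ^ 2 + Fintype.card F := by
  have hq : (Fintype.card F : ℂ) ≠ 0 := Nat.cast_ne_zero.mpr Fintype.card_ne_zero
  have h := card_mul_sum_quadSurf_dim4 hF hχ hb 0
  simp only [zero_dotProduct, AddChar.map_zero_eq_one, Finset.sum_const, nsmul_one, if_true,
    show (0 : Fin 4 → F) ∈ dualSurf b by simp [dualSurf]] at h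
  rcases complexQuadraticChar_dichotomy (prod_ne_zero_iff.mpr fun i _ => hb i : ∏ i, b i ≠ 0)
    with hε | hε <;> [left; right] <;>
  · apply Complex.ofReal_injective
    push_cast
    apply mul_left_cancel₀ hq
    rw [h, hε]
    ring

lemma norm_sum_quadSurf_dim4 (hF : ringChar F ≠ 2) (hχ : χ ≠ 1) {b : Fin 4 → F}
    (hb : ∀ i, b i ≠ 0) {m : Fin 4 → F} (hm : m ≠ 0) :
    ‖∑ x ∈ quadSurf b, χ (m ⬝ᵥ x)‖
      = if m ∈ dualSurf b then (Fintype.card F : ℝ) ^ 2 - Fintype.card F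
        else (Fintype.card F : ℝ) := by
  have hq : (1 : ℝ) ≤ Fintype.card F := by exact_mod_cast Fintype.card_pos
  have h := congrArg norm (card_mul_sum_quadSurf_dim4 hF hχ hb m)
  have hε : ‖complexQuadraticChar F (∏ i, b i)‖ = 1 := by
    rcases complexQuadraticChar_dichotomy (prod_ne_zero_iff.mpr fun i _ => hb i : ∏ i, b i ≠ 0)
      with hε | hε <;> rw [hε] <;> simp
  rw [if_neg hm, zero_add, norm_mul, norm_mul, norm_mul, hε, one_mul, Complex.norm_natCast,
    norm_pow, Complex.norm_natCast] at h
  apply mul_left_cancel₀ (show (Fintype.card F : ℝ) ≠ 0 by positivity)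
  rw [h]
  split_ifs
  · have hcast : (Fintype.card F : ℂ) - 1 = ((Fintype.card F - 1 : ℝ) : ℂ) := by push_cast; rfl
    rw [hcast, Complex.norm_real, Real.norm_of_nonneg (by linarith)]
    ring
  · simp only [zero_sub, norm_neg, norm_one]
    ring

lemma card_quadSurf_dim4_bounds (hF : ringChar F ≠ 2) (hχ : χ ≠ 1) {b : Fin 4 → F}
    (hb : ∀ i, b i ≠ 0) :
    (Fintype.card F : ℝ) ^ 3 / 2 ≤ #(quadSurf b) ∧
      (#(quadSurf b) : ℝ) ≤ 2 * (Fintype.card F) ^ 3 := by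
  have hq : (1 : ℝ) ≤ Fintype.card F := by exact_mod_cast Fintype.card_pos
  rcases card_quadSurf_dim4 hF hχ hb with h | h <;> rw [h] <;> constructor <;> nlinarith

lemma dualSurf_eq_quadSurf_inv (a : Fin d → F) : dualSurf a = quadSurf a⁻¹ := by
  simp [dualSurf, quadSurf, mul_comm]

variable (χ) in
lemma norm_sigmaInv (a m : Fin d → F) :
    ‖sigmaInv χ a m‖ = ‖∑ x ∈ quadSurf a, χ (m ⬝ᵥ x)‖ / #(quadSurf a) := by
  rw [sigmaInv, norm_mul, norm_inv, Complex.norm_natCast, inv_mul_eq_div]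
  rfl

lemma norm_brKernel_le_dim4 (hF : ringChar F ≠ 2) (hχ : χ ≠ 1) {a : Fin 4 → F}
    (ha : ∀ i, a i ≠ 0) (m : Fin 4 → F) :
    ‖brKernel χ a m‖ ≤ 2 / Fintype.card F := by
  have hq : (1 : ℝ) ≤ Fintype.card F := by exact_mod_cast Fintype.card_pos
  have hS := (card_quadSurf_dim4_bounds hF hχ ha).1
  unfold brKernel
  split_ifs with hm
  · simp; positivity
  · rw [norm_sigmaInv, norm_sum_quadSurf_dim4 hF hχ ha hm,
      div_le_div_iff₀ ((by positivity : (0 : ℝ) < _).trans_le hS) (by positivity)]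
    split_ifs <;> nlinarith

lemma norm_brKernel_le_dim4_of_not_mem_dualSurf (hF : ringChar F ≠ 2) (hχ : χ ≠ 1)
    {a : Fin 4 → F} (ha : ∀ i, a i ≠ 0) {m : Fin 4 → F} (hm : m ∉ dualSurf a) :
    ‖brKernel χ a m‖ ≤ 2 / (Fintype.card F : ℝ) ^ 2 := by
  have hq : (1 : ℝ) ≤ Fintype.card F := by exact_mod_cast Fintype.card_pos
  have hS := (card_quadSurf_dim4_bounds hF hχ ha).1
  have hm0 : m ≠ 0 := by rintro rfl; exact hm (by simp [dualSurf])
  rw [brKernel, if_neg hm0, norm_sigmaInv, norm_sum_quadSurf_dim4 hF hχ ha hm0, if_neg hm,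
    div_le_div_iff₀ ((by positivity : (0 : ℝ) < _).trans_le hS) (by positivity)]
  nlinarith

lemma norm_convInd_le_dim4 (hF : ringChar F ≠ 2) (hχ : χ ≠ 1) {a : Fin 4 → F}
    (ha : ∀ i, a i ≠ 0) (E : Finset (Fin 4 → F)) (x : Fin 4 → F) :
    ‖convInd χ a E x‖ ≤ 3 * #E / (Fintype.card F : ℝ) ^ 3 := by
  have hq : (1 : ℝ) ≤ Fintype.card F := by exact_mod_cast Fintype.card_pos
  have hS := (card_quadSurf_dim4_bounds hF hχ ha).1
  refine (norm_convInd_le hχ a E x).trans ?_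
  have h1 : (#E : ℝ) / #(quadSurf a) ≤ 2 * #E / (Fintype.card F : ℝ) ^ 3 := by
    rw [div_le_div_iff₀ ((by positivity : (0 : ℝ) < _).trans_le hS) (by positivity)]
    nlinarith [(#E).cast_nonneg (α := ℝ)]
  have h2 : (#E : ℝ) / (Fintype.card F : ℝ) ^ 4 ≤ #E / (Fintype.card F : ℝ) ^ 3 :=
    div_le_div_of_nonneg_left (by positivity) (by positivity) (pow_le_pow_right₀ hq (by norm_num))
  calc _ ≤ 2 * #E / (Fintype.card F : ℝ) ^ 3 + #E / (Fintype.card F : ℝ) ^ 3 := add_le_add h1 h2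
    _ = 3 * #E / (Fintype.card F : ℝ) ^ 3 := by ring

lemma sum_norm_sq_convInd_le_dim4 (hF : ringChar F ≠ 2) (hχ : χ ≠ 1) {a : Fin 4 → F}
    (ha : ∀ i, a i ≠ 0) (E : Finset (Fin 4 → F)) :
    ∑ x, ‖convInd χ a E x‖ ^ 2 ≤ 4 * #E / (Fintype.card F : ℝ) ^ 2 := by
  have hq : (0 : ℝ) < Fintype.card F := by exact_mod_cast Fintype.card_pos
  set q : ℝ := (Fintype.card F : ℝ)
  rw [sum_norm_sq_convInd hχ, div_le_div_iff₀ (by positivity) (by positivity)]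
  calc (∑ m, ‖brKernel χ a m‖ ^ 2 * ‖expSum χ E m‖ ^ 2) * q ^ 2
      ≤ (∑ m, (2 / q) ^ 2 * ‖expSum χ E m‖ ^ 2) * q ^ 2 := by
        gcongr with m
        exact norm_brKernel_le_dim4 hF hχ ha m
    _ ≤ (2 / q) ^ 2 * (#E * q ^ 4) * q ^ 2 := by
        rw [← Finset.mul_sum]
        gcongr
        exact sum_norm_sq_expSum_univ_le hχ E
    _ = 4 * #E * q ^ 4 := by field_simp; ring

lemma sum_norm_sq_expSum_dualSurf_le_dim4 (hF : ringChar F ≠ 2) (hχ : χ ≠ 1) {a : Fin 4 → F}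
    (ha : ∀ i, a i ≠ 0) (E : Finset (Fin 4 → F)) :
    ∑ m ∈ dualSurf a, ‖expSum χ E m‖ ^ 2
      ≤ #E * (2 * (Fintype.card F : ℝ) ^ 3) + #E ^ 2 * (Fintype.card F : ℝ) ^ 2 := by
  have hq : (1 : ℝ) ≤ Fintype.card F := by exact_mod_cast Fintype.card_pos
  have ha' : ∀ i, a⁻¹ i ≠ 0 := fun i => inv_ne_zero (ha i)
  rw [dualSurf_eq_quadSurf_inv]
  refine (sum_norm_sq_expSum_le (A := (Fintype.card F : ℝ) ^ 2) E _ (by positivity)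
    fun z hz => ?_).trans ?_
  · simp_rw [dotProduct_comm _ z]
    rw [norm_sum_quadSurf_dim4 hF hχ ha' hz]
    split_ifs <;> nlinarith
  · gcongr
    exact (card_quadSurf_dim4_bounds hF hχ ha').2

lemma sum_norm_sq_convInd_le_dim4_split (hF : ringChar F ≠ 2) (hχ : χ ≠ 1) {a : Fin 4 → F}
    (ha : ∀ i, a i ≠ 0) (E : Finset (Fin 4 → F)) :
    ∑ x, ‖convInd χ a E x‖ ^ 2
      ≤ (8 * #E * Fintype.card F + 4 * #E ^ 2 + 4 * #E) / (Fintype.card F : ℝ) ^ 4 := by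
  have hq : (0 : ℝ) < Fintype.card F := by exact_mod_cast Fintype.card_pos
  set q : ℝ := (Fintype.card F : ℝ)
  rw [sum_norm_sq_convInd hχ]
  gcongr
  rw [← Finset.sum_filter_add_sum_filter_not univ (· ∈ dualSurf a), Finset.filter_univ_mem]
  have hon : ∑ m ∈ dualSurf a, ‖brKernel χ a m‖ ^ 2 * ‖expSum χ E m‖ ^ 2
      ≤ 8 * #E * q + 4 * #E ^ 2 :=
    calc _ ≤ ∑ m ∈ dualSurf a, (2 / q) ^ 2 * ‖expSum χ E m‖ ^ 2 := by
          gcongr with m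
          exact norm_brKernel_le_dim4 hF hχ ha m
      _ ≤ (2 / q) ^ 2 * (#E * (2 * q ^ 3) + #E ^ 2 * q ^ 2) := by
          rw [← Finset.mul_sum]
          gcongr
          exact sum_norm_sq_expSum_dualSurf_le_dim4 hF hχ ha E
      _ = 8 * #E * q + 4 * #E ^ 2 := by field_simp; ring
  have hoff : ∑ m with m ∉ dualSurf a, ‖brKernel χ a m‖ ^ 2 * ‖expSum χ E m‖ ^ 2 ≤ 4 * #E :=
    calc _ ≤ ∑ m with m ∉ dualSurf a, (2 / q ^ 2) ^ 2 * ‖expSum χ E m‖ ^ 2 := by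
          gcongr with m hm
          exact norm_brKernel_le_dim4_of_not_mem_dualSurf hF hχ ha (mem_filter.mp hm).2
      _ ≤ (2 / q ^ 2) ^ 2 * (#E * q ^ 4) := by
          rw [← Finset.mul_sum]
          gcongr
          exact (Finset.sum_le_sum_of_subset_of_nonneg (filter_subset _ _)
            fun _ _ _ => by positivity).trans (sum_norm_sq_expSum_univ_le hχ E)
      _ = 4 * #E := by field_simp; ring
  linarith

end

lemma Lnorm_six_le {α : Type} [Fintype α] {g : α → ℂ} {B M Y : ℝ} (hY : 0 ≤ Y)
    (hB : ∀ x, ‖g x‖ ≤ B) (hM : ∑ x, ‖g x‖ ^ 2 ≤ M)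
    (h : B ^ 4 * M ≤ Fintype.card α * Y ^ 6) : Lnorm 6 g ≤ Y := by
  have hsix : ∑ x, ‖g x‖ ^ 6 ≤ Fintype.card α * Y ^ 6 :=
    calc ∑ x, ‖g x‖ ^ 6 = ∑ x, ‖g x‖ ^ 4 * ‖g x‖ ^ 2 := by simp_rw [← pow_add]
      _ ≤ ∑ x, B ^ 4 * ‖g x‖ ^ 2 := by
          gcongr with x
          exact hB x
      _ ≤ B ^ 4 * M := by
          rw [← Finset.mul_sum]
          exact mul_le_mul_of_nonneg_left hM (by positivity)
      _ ≤ _ := h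
  have hmean : (Fintype.card α : ℝ)⁻¹ * ∑ x, ‖g x‖ ^ (6 : ℝ) ≤ Y ^ (6 : ℝ) := by
    norm_cast
    rcases (Fintype.card α).eq_zero_or_pos with h0 | hpos
    · simp [h0]; positivity
    · rw [inv_mul_le_iff₀ (by exact_mod_cast hpos)]
      exact hsix
  calc Lnorm 6 g ≤ (Y ^ (6 : ℝ)) ^ (1 / 6 : ℝ) :=
        Real.rpow_le_rpow (by positivity) hmean (by norm_num)
    _ = Y := by rw [← Real.rpow_mul hY]; norm_num

/-- L⁶ bounds for E ∗ K̂ in dimension 4, in three ranges of |E|. -/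
theorem convInd_l6_bound_dim4 :
    ∃ C : ℝ, 0 < C ∧
      ∀ (F : Type) [Field F] [Fintype F] [DecidableEq F],
        Odd (Fintype.card F) →
        ∀ (χ : AddChar F ℂ), χ ≠ 1 →
        ∀ (a : Fin 4 → F), (∀ i, a i ≠ 0) →
        ∀ (E : Finset (Fin 4 → F)),
          ((1 ≤ (E.card : ℝ) ∧ (E.card : ℝ) ≤ (Fintype.card F : ℝ)) →
            Lnorm 6 (convInd χ a E)
              ≤ C * (Fintype.card F : ℝ) ^ (-(19 : ℝ) / 6)
                  * (E.card : ℝ) ^ ((5 : ℝ) / 6)) ∧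
          (((Fintype.card F : ℝ) ≤ (E.card : ℝ) ∧
              (E.card : ℝ) ≤ (Fintype.card F : ℝ) ^ 2) →
            Lnorm 6 (convInd χ a E)
              ≤ C * (Fintype.card F : ℝ) ^ (-(10 : ℝ) / 3) * (E.card : ℝ)) ∧
          (((Fintype.card F : ℝ) ^ 2 ≤ (E.card : ℝ) ∧
              (E.card : ℝ) ≤ (Fintype.card F : ℝ) ^ 4) →
            Lnorm 6 (convInd χ a E)
              ≤ C * (Fintype.card F : ℝ) ^ (-(3 : ℝ))
                  * (E.card : ℝ) ^ ((5 : ℝ) / 6)) := by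
  refine ⟨4, by norm_num, fun F _ _ _ hodd χ hχ a ha E => ?_⟩
  have hF : ringChar F ≠ 2 := fun h =>
    Nat.not_even_iff_odd.mpr hodd (Nat.even_iff.mpr (FiniteField.even_card_iff_char_two.mp h))
  have hq : (1 : ℝ) ≤ Fintype.card F := by exact_mod_cast Fintype.card_pos
  have he : (0 : ℝ) ≤ #E := by positivity
  have hcard : (Fintype.card (Fin 4 → F) : ℝ) = (Fintype.card F : ℝ) ^ 4 := by simp
  have hsup := norm_convInd_le_dim4 hF hχ ha E
  have hL2 := sum_norm_sq_convInd_le_dim4_split hF hχ ha E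
  refine ⟨fun ⟨_, heq⟩ => Lnorm_six_le (by positivity) hsup hL2 ?_,
    fun ⟨hqe, _⟩ => Lnorm_six_le (by positivity) hsup hL2 ?_,
    fun _ => Lnorm_six_le (by positivity) hsup (sum_norm_sq_convInd_le_dim4 hF hχ ha E) ?_⟩
  all_goals
    simp only [hcard, mul_pow, ← Real.rpow_mul_natCast (by positivity : (0 : ℝ) ≤ Fintype.card F),
      ← Real.rpow_mul_natCast he]
    norm_num
    field_simp
    nlinarith [pow_nonneg he 5]
end
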